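/- arXiv:2512.10064 — 11 statements merged into one kernel-verified Lean document; each statement's English description precedes it below -/
import Mathlib

section
/- Let X be a connected, locally path-connected topological space with basepoint x₀, and let p : (E, e₀) → (X, x₀) and q : (F, f₀) → (X, x₀) be pointed connected coverings of (X, x₀). If p_*(π₁(E, e₀)) = q_*(π₁(F, f₀)) as subgroups of π₁(X, x₀), then there exists a homeomorphism h : E ≃ₜ F with q ∘ h = p and h(e₀) = f₀. -/
open CategoryTheory

universe u

attribute [local instance] Path.Homotopic.setoid

/-- The homomorphism `p₊ : π₁(E, e₀) →* π₁(X, p e₀)` induced on fundamental groups by a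
continuous map `p`, obtained from the fundamental groupoid functor. -/
noncomputable def piOneMap {E X : Type u} [TopologicalSpace E] [TopologicalSpace X]
    (p : E → X) (hp : Continuous p) (e₀ : E) :
    FundamentalGroup E e₀ →* FundamentalGroup X (p e₀) :=
  Functor.mapEnd
    (FundamentalGroupoid.fundamentalGroupoidFunctor.map
      (X := TopCat.of E) (Y := TopCat.of X) (TopCat.ofHom ⟨p, hp⟩))
    (X := FundamentalGroupoid.mk e₀)

/-- The element of the fundamental group determined by a loop. -/
noncomputable def loopClass {X : Type u} [TopologicalSpace X] {x : X} (γ : Path x x) :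
    FundamentalGroup X x :=
  FundamentalGroup.fromPath (X := TopCat.of X) ⟦γ⟧

/-- `piOneMap` indeed sends the homotopy class of a loop `γ` to the class of `p ∘ γ`. -/
theorem piOneMap_loopClass {E X : Type u} [TopologicalSpace E] [TopologicalSpace X]
    (p : E → X) (hp : Continuous p) (e₀ : E) (γ : Path e₀ e₀) :
    piOneMap p hp e₀ (loopClass γ) = loopClass (γ.map hp) :=
  rfl

/-!
A covering of a locally path-connected space is itself locally path-connected, so the connected
coverings `E` and `F` are path-connected and the lifting criterion applies to them. Equality of
the image subgroups therefore lifts `p` through `q` and `q` through `p`, with basepoints going to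
basepoints. Each composite of the two lifts is a self-map of a connected covering over the base
that fixes the basepoint, hence the identity by uniqueness of lifts.
-/

open Topology FundamentalGroup

theorem piOneMap_eq_map {E X : Type u} [TopologicalSpace E] [TopologicalSpace X]
    (p : E → X) (hp : Continuous p) (e₀ : E) :
    piOneMap p hp e₀ = map ⟨p, hp⟩ e₀ :=
  rfl

theorem FundamentalGroup.range_mapOfEq {X Y : Type*} [TopologicalSpace X] [TopologicalSpace Y]
    (f : C(X, Y)) {x : X} {y : Y} (h : f x = y) :
    (mapOfEq f h).range = (h ▸ (map f x).range : Subgroup (FundamentalGroup Y y)) := by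
  subst h
  ext g
  simp [mapOfEq]

theorem IsLocalHomeomorph.locallyPathConnectedSpace {E X : Type*} [TopologicalSpace E]
    [TopologicalSpace X] [LocallyPathConnectedSpace X] {p : E → X} (hp : IsLocalHomeomorph p) :
    LocallyPathConnectedSpace E := by
  choose φ hmem hφ using hp
  have (e : E) : LocallyPathConnectedSpace (φ e).source :=
    (φ e).isOpenEmbedding_restrict.locallyPathConnectedSpace
  -- `E` is a quotient of the disjoint union of the chart domains.
  have hquot : IsQuotientMap (fun x : Σ e, (φ e).source => (x.2 : E)) :=
    IsOpenMap.isQuotientMap (isOpenMap_sigma.2 fun e => (φ e).open_source.isOpenMap_subtype_val)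
      (continuous_sigma fun e => continuous_subtype_val) fun e => ⟨⟨e, e, hmem e⟩, rfl⟩
  exact hquot.locallyPathConnectedSpace

namespace IsCoveringMap

variable {E F X : Type*} [TopologicalSpace E] [TopologicalSpace F] [TopologicalSpace X]
  {p : E → X} {q : F → X}

theorem exists_lift_of_range_le [PathConnectedSpace F] [LocallyPathConnectedSpace F]
    (hp : IsCoveringMap p) {f : F → X} (hf : Continuous f) {e₀ : E} {f₀ : F} {x₀ : X}
    (he : p e₀ = x₀) (hf₀ : f f₀ = x₀)
    (le : (mapOfEq ⟨f, hf⟩ hf₀).range ≤ (mapOfEq ⟨p, hp.continuous⟩ he).range) :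
    ∃ g : C(F, E), g f₀ = e₀ ∧ p ∘ g = f := by
  subst hf₀
  rw [range_mapOfEq _ rfl] at le
  exact (hp.existsUnique_continuousMap_lifts_of_range_le he le).exists

theorem comp_eq_id_of_apply_eq [PreconnectedSpace E] (hp : IsCoveringMap p) {h : C(E, F)}
    {k : C(F, E)} (hqh : q ∘ h = p) (hpk : p ∘ k = q) (e₀ : E) (he : k (h e₀) = e₀) :
    k.comp h = .id E :=
  ContinuousMap.coe_injective <| hp.eq_of_comp_eq (k.comp h).continuous continuous_id
    (by rw [ContinuousMap.coe_comp, ← Function.comp_assoc, hpk, hqh]; rfl) e₀ he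

theorem exists_homeomorph_of_range_eq [PathConnectedSpace E] [PathConnectedSpace F]
    [LocallyPathConnectedSpace E] [LocallyPathConnectedSpace F]
    (hp : IsCoveringMap p) (hq : IsCoveringMap q) {e₀ : E} {f₀ : F} {x₀ : X}
    (hpe : p e₀ = x₀) (hqf : q f₀ = x₀)
    (hrange :
      (mapOfEq ⟨p, hp.continuous⟩ hpe).range = (mapOfEq ⟨q, hq.continuous⟩ hqf).range) :
    ∃ h : E ≃ₜ F, q ∘ h = p ∧ h e₀ = f₀ := by
  obtain ⟨h, hh₀, hqh⟩ := hq.exists_lift_of_range_le hp.continuous hqf hpe hrange.le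
  obtain ⟨k, hk₀, hpk⟩ := hp.exists_lift_of_range_le hq.continuous hpe hqf hrange.ge
  have hkh := hp.comp_eq_id_of_apply_eq hqh hpk e₀ (by rw [hh₀, hk₀])
  have hhk := hq.comp_eq_id_of_apply_eq hpk hqh f₀ (by rw [hk₀, hh₀])
  exact ⟨⟨⟨h, k, fun e => congr($hkh e), fun f => congr($hhk f)⟩,
    h.continuous, k.continuous⟩, hqh, hh₀⟩

end IsCoveringMap

theorem pointed_coverings_iso_of_eq_subgroup_general
    {X E F : Type u} [TopologicalSpace X] [TopologicalSpace E] [TopologicalSpace F]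
    [LocallyPathConnectedSpace X] (x₀ : X)
    {p : E → X} {q : F → X} (hp : IsCoveringMap p) (hq : IsCoveringMap q)
    [ConnectedSpace E] [ConnectedSpace F]
    (e₀ : E) (f₀ : F) (hpe : p e₀ = x₀) (hqf : q f₀ = x₀)
    (hsub : (hpe ▸ (piOneMap p hp.continuous e₀).range :
        Subgroup (FundamentalGroup X x₀)) = hqf ▸ (piOneMap q hq.continuous f₀).range) :
    ∃ h : E ≃ₜ F, (∀ e, q (h e) = p e) ∧ h e₀ = f₀ := by
  have := hp.isLocalHomeomorph.locallyPathConnectedSpace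
  have := hq.isLocalHomeomorph.locallyPathConnectedSpace
  have := PathConnectedSpace.of_locallyPathConnectedSpace (X := E)
  have := PathConnectedSpace.of_locallyPathConnectedSpace (X := F)
  rw [piOneMap_eq_map, piOneMap_eq_map, ← range_mapOfEq, ← range_mapOfEq] at hsub
  obtain ⟨h, hqh, hh₀⟩ := hp.exists_homeomorph_of_range_eq hq hpe hqf hsub
  exact ⟨h, congrFun hqh, hh₀⟩

/-- If two pointed connected coverings of a connected, locally path-connected pointed space
`(X, x₀)` have the same image subgroup of `π₁(X, x₀)`, then they are isomorphic as pointed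
coverings. -/
theorem pointed_coverings_iso_of_eq_subgroup
    {X E F : Type u} [TopologicalSpace X] [TopologicalSpace E] [TopologicalSpace F]
    [ConnectedSpace X] [LocallyPathConnectedSpace X] (x₀ : X)
    {p : E → X} {q : F → X} (hp : IsCoveringMap p) (hq : IsCoveringMap q)
    [ConnectedSpace E] [ConnectedSpace F]
    (e₀ : E) (f₀ : F) (hpe : p e₀ = x₀) (hqf : q f₀ = x₀)
    (hsub : (hpe ▸ (piOneMap p hp.continuous e₀).range :
        Subgroup (FundamentalGroup X x₀)) = hqf ▸ (piOneMap q hq.continuous f₀).range) :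
    ∃ h : E ≃ₜ F, (∀ e, q (h e) = p e) ∧ h e₀ = f₀ :=
  pointed_coverings_iso_of_eq_subgroup_general x₀ hp hq e₀ f₀ hpe hqf hsub
end

section
/- Let X be a connected, locally path-connected, semilocally simply connected topological space with basepoint x₀. For every subgroup H of π₁(X, x₀) there exists a covering map p : E → X with E connected and a point e₀ ∈ E with p(e₀) = x₀ such that p_*(π₁(E, e₀)) = H. -/
open CategoryTheory

universe u

attribute [local instance] Path.Homotopic.setoid

/-- `X` is semilocally simply connected: every point has a neighbourhood `U` such that every
loop in `U` based at `x` is null-homotopic in `X`. -/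
def SemilocallySimplyConnected (X : Type u) [TopologicalSpace X] : Prop :=
  ∀ x : X, ∃ U ∈ nhds x, ∀ γ : Path x x, (∀ t, γ t ∈ U) → γ.Homotopic (Path.refl x)

/-!
A functor `F` from the fundamental groupoid of `X` to sets defines a space over `X`: its points
are pairs `(x, v)` with `v ∈ F x`, and the basic open sets are the *sheets* `sheet (x, v) U`
of all transports of `v` along paths inside an open set `U`. Over a path-connected open `U` in
which any two paths with the same endpoints are homotopic in `X` (semilocal simple connectivity
and local path-connectedness provide these around every point), the sheets through the fibre
over `x ∈ U` are disjoint and each maps bijectively onto `U`, so the projection is a covering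
map. Lifting a path `γ` from `(a, v)` ends at `(b, F γ v)`, hence the image of `π₁` of the
total space at `(x₀, v)` is the stabiliser of `v`. For `F x = H \ Hom(x₀, x)` and `v` the coset
of the identity this stabiliser is `H`, and every point `(x, H g)` is reached from `(x₀, H)` by
lifting a path representing `g`, so the total space is path connected.
-/

universe v

namespace FundamentalGroupoid

open unitInterval

variable {X : Type u} [TopologicalSpace X]

def homOfPath {a b : X} (η : Path a b) : mk a ⟶ mk b := ⟦η⟧

@[simp] lemma homOfPath_trans {a b c : X} (η : Path a b) (η' : Path b c) :
    homOfPath (η.trans η') = homOfPath η ≫ homOfPath η' := rfl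

@[simp] lemma homOfPath_refl (a : X) : homOfPath (Path.refl a) = 𝟙 (mk a) := rfl

@[simp] lemma homOfPath_symm {a b : X} (η : Path a b) :
    homOfPath η.symm = Groupoid.inv (homOfPath η) := rfl

lemma homOfPath_eq_iff {a b : X} {η η' : Path a b} :
    homOfPath η = homOfPath η' ↔ η.Homotopic η' := Quotient.eq

lemma homOfPath_surjective {a b : X} :
    Function.Surjective (homOfPath : Path a b → (mk a ⟶ mk b)) :=
  Quotient.mk_surjective

lemma homOfPath_cast {a b a' b' : X} (η : Path a b) (ha : a' = a) (hb : b' = b) :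
    homOfPath (η.cast ha hb) =
      eqToHom (congrArg mk ha) ≫ homOfPath η ≫ eqToHom (congrArg mk hb.symm) := by
  subst ha hb
  simp

lemma homOfPath_subpath_comp_subpath {a b : X} (γ : Path a b) (s t r : I) :
    homOfPath (γ.subpath s t) ≫ homOfPath (γ.subpath t r) = homOfPath (γ.subpath s r) :=
  Quotient.sound ⟨Path.Homotopy.subpathTransSubpath γ s t r⟩

end FundamentalGroupoid

section RelSimplyConnected

open FundamentalGroupoid Set

variable {X : Type u} [TopologicalSpace X]

def IsRelSimplyConnected (U : Set X) : Prop :=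
  ∀ ⦃a b : X⦄ (η η' : Path a b), range η ⊆ U → range η' ⊆ U → η.Homotopic η'

theorem SemilocallySimplyConnected.exists_isRelSimplyConnected [LocallyPathConnectedSpace X]
    (hX : SemilocallySimplyConnected X) (x : X) :
    ∃ U, IsOpen U ∧ IsPathConnected U ∧ x ∈ U ∧ IsRelSimplyConnected U := by
  obtain ⟨U₀, hU₀, hnull⟩ := hX x
  obtain ⟨U, ⟨hU, hxU, hUconn⟩, hUU₀⟩ := (isOpen_isPathConnected_basis x).mem_iff.mp hU₀
  refine ⟨U, hU, hUconn, hxU, fun a b η η' hη hη' => homOfPath_eq_iff.mp ?_⟩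
  obtain ⟨ρ, hρ⟩ := hUconn.joinedIn x hxU a (hη η.source_mem_range)
  have hloop : range (((ρ.trans η).trans η'.symm).trans ρ.symm) ⊆ U := by
    simp only [Path.trans_range, Path.symm_range, union_subset_iff]
    exact ⟨⟨⟨range_subset_iff.mpr hρ, hη⟩, hη'⟩, range_subset_iff.mpr hρ⟩
  have hclass := homOfPath_eq_iff.mpr (hnull _ (range_subset_iff.mp (hloop.trans hUU₀)))
  simpa only [homOfPath_trans, homOfPath_symm, homOfPath_refl, Groupoid.inv_eq_inv,
    IsIso.comp_inv_eq, Category.id_comp, cancel_epi] using hclass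

end RelSimplyConnected

namespace FundamentalGroupoid

open Set Topology

variable {X : Type u} [TopologicalSpace X]

structure CoveringSpace (F : FundamentalGroupoid X ⥤ Type v) where
  proj : X
  fib : F.obj (mk proj)

namespace CoveringSpace

variable {F : FundamentalGroupoid X ⥤ Type v}

lemma mk_map_eqToHom {a b : X} (h : a = b) (v : F.obj (.mk a)) :
    (⟨b, F.map (eqToHom (congrArg FundamentalGroupoid.mk h)) v⟩ : CoveringSpace F) = ⟨a, v⟩ := by
  subst h
  simp

def sheet (e : CoveringSpace F) (U : Set X) : Set (CoveringSpace F) :=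
  {e' | ∃ η : Path e.proj e'.proj, range η ⊆ U ∧ e'.fib = F.map (homOfPath η) e.fib}

instance : TopologicalSpace (CoveringSpace F) :=
  .generateFrom {s | ∃ e U, IsOpen U ∧ s = sheet e U}

variable {e e' : CoveringSpace F} {U V : Set X}

lemma mem_sheet_self (he : e.proj ∈ U) : e ∈ sheet e U :=
  ⟨Path.refl _, by simpa using he, by simp⟩

lemma proj_mem_of_mem_sheet (h : e' ∈ sheet e U) : e'.proj ∈ U :=
  h.elim fun η hη => hη.1 η.target_mem_range

lemma sheet_mono (hUV : U ⊆ V) : sheet e U ⊆ sheet e V :=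
  fun _ ⟨η, hη, hfib⟩ => ⟨η, hη.trans hUV, hfib⟩

lemma sheet_eq_of_mem (h : e' ∈ sheet e U) : sheet e' U = sheet e U := by
  obtain ⟨η, hηU, hfib⟩ := h
  ext e''
  constructor
  · rintro ⟨μ, hμU, hfib'⟩
    refine ⟨η.trans μ, by simpa [Path.trans_range] using ⟨hηU, hμU⟩, ?_⟩
    simp [hfib', hfib]
  · rintro ⟨μ, hμU, hfib'⟩
    refine ⟨η.symm.trans μ, by simpa [Path.trans_range] using ⟨hηU, hμU⟩, ?_⟩
    simp [hfib', hfib]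

lemma isTopologicalBasis_sheet :
    TopologicalSpace.IsTopologicalBasis
      {s : Set (CoveringSpace F) | ∃ e U, IsOpen U ∧ s = sheet e U} := by
  refine ⟨?_, ?_, rfl⟩
  · rintro _ ⟨e₁, U₁, hU₁, rfl⟩ _ ⟨e₂, U₂, hU₂, rfl⟩ e ⟨h₁, h₂⟩
    refine ⟨sheet e (U₁ ∩ U₂), ⟨e, _, hU₁.inter hU₂, rfl⟩,
      mem_sheet_self ⟨proj_mem_of_mem_sheet h₁, proj_mem_of_mem_sheet h₂⟩, ?_⟩
    rw [← sheet_eq_of_mem h₁, ← sheet_eq_of_mem h₂]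
    exact subset_inter (sheet_mono inter_subset_left) (sheet_mono inter_subset_right)
  · exact sUnion_eq_univ_iff.mpr fun e => ⟨_, ⟨e, univ, isOpen_univ, rfl⟩, mem_sheet_self trivial⟩

lemma isOpen_sheet (hU : IsOpen U) : IsOpen (sheet e U) :=
  isTopologicalBasis_sheet.isOpen ⟨e, U, hU, rfl⟩

lemma continuous_proj : Continuous (proj (F := F)) := by
  refine continuous_def.mpr fun V hV => isOpen_iff_forall_mem_open.mpr fun e he => ?_
  exact ⟨sheet e V, fun _ => proj_mem_of_mem_sheet, isOpen_sheet hV, mem_sheet_self he⟩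

lemma proj_image_sheet : proj '' sheet e U = pathComponentIn U e.proj := by
  ext y
  constructor
  · rintro ⟨e', ⟨η, hηU, -⟩, rfl⟩
    exact ⟨η, range_subset_iff.mp hηU⟩
  · rintro ⟨η, hηU⟩
    exact ⟨⟨y, F.map (homOfPath η) e.fib⟩, ⟨η, range_subset_iff.mpr hηU, rfl⟩, rfl⟩

lemma proj_image_sheet_of_isPathConnected (hU : IsPathConnected U) (he : e.proj ∈ U) :
    proj '' sheet e U = U :=
  proj_image_sheet.trans <| pathComponentIn_subset.antisymm (hU.subset_pathComponentIn he le_rfl)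

lemma isOpenMap_proj [LocallyPathConnectedSpace X] : IsOpenMap (proj (F := F)) := by
  refine isTopologicalBasis_sheet.isOpenMap_iff.mpr ?_
  rintro _ ⟨e, U, hU, rfl⟩
  rw [proj_image_sheet]
  exact hU.pathComponentIn _

lemma injOn_proj_sheet (hU : IsRelSimplyConnected U) : InjOn proj (sheet e U) := by
  rintro ⟨y, v⟩ ⟨η, hηU, hv⟩ ⟨y', v'⟩ ⟨η', hη'U, hv'⟩ (rfl : y = y')
  simp only [CoveringSpace.mk.injEq, heq_eq_eq, true_and]
  rw [homOfPath_eq_iff.mpr (hU η η' hηU hη'U)] at hv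
  exact hv.trans hv'.symm

lemma exists_mem_sheet_of_isPathConnected (hU : IsPathConnected U) {x : X} (hx : x ∈ U)
    (he : e.proj ∈ U) : ∃ v : F.obj (.mk x), e ∈ sheet ⟨x, v⟩ U := by
  obtain ⟨η, hηU⟩ := hU.joinedIn e.proj he x hx
  have hmem : (⟨x, F.map (homOfPath η) e.fib⟩ : CoveringSpace F) ∈ sheet e U :=
    ⟨η, range_subset_iff.mpr hηU, rfl⟩
  exact ⟨_, (sheet_eq_of_mem hmem).symm ▸ mem_sheet_self he⟩

lemma disjoint_sheet_of_ne (hU : IsRelSimplyConnected U) {x : X} {v w : F.obj (.mk x)}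
    (hvw : v ≠ w) : Disjoint (sheet ⟨x, v⟩ U) (sheet ⟨x, w⟩ U) := by
  refine disjoint_left.mpr fun e hv hw => hvw ?_
  have hsheet : sheet ⟨x, v⟩ U = sheet ⟨x, w⟩ U :=
    (sheet_eq_of_mem hv).symm.trans (sheet_eq_of_mem hw)
  obtain ⟨η, hηU, -⟩ := hv
  have hxU : x ∈ U := hηU η.source_mem_range
  have hw' : (⟨x, w⟩ : CoveringSpace F) ∈ sheet ⟨x, v⟩ U := hsheet ▸ mem_sheet_self hxU
  simpa using injOn_proj_sheet hU (mem_sheet_self hxU) hw' rfl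

lemma isEvenlyCovered_proj [LocallyPathConnectedSpace X] (hU : IsOpen U)
    (hUconn : IsPathConnected U) (hUsc : IsRelSimplyConnected U) {x : X} (hx : x ∈ U) :
    IsEvenlyCovered (proj (F := F)) x (proj (F := F) ⁻¹' {x}) := by
  let : TopologicalSpace (F.obj (.mk x)) := ⊥
  have : DiscreteTopology (F.obj (.mk x)) := ⟨rfl⟩
  refine IsEvenlyCovered.to_isEvenlyCovered_preimage (I := F.obj (.mk x)) ?_
  rcases isEmpty_or_nonempty (F.obj (.mk x)) with _ | hne
  · refine .of_preimage_eq_empty _ (hU.mem_nhds hx) (eq_empty_of_forall_notMem fun e he => ?_)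
    obtain ⟨v, -⟩ := exists_mem_sheet_of_isPathConnected hUconn hx he
    exact isEmptyElim v
  have : Nonempty (X → CoveringSpace F) := hne.map fun v _ => ⟨x, v⟩
  refine .of_trivialization (t := hU.trivializationDiscrete (f := proj)
    (fun v => sheet ⟨x, v⟩ U) U (fun v W hWU => ⟨fun hW => ?_, fun hW => ?_⟩)
    (fun _ => injOn_proj_sheet hUsc) (fun _ => ?_) (fun _ _ => disjoint_sheet_of_ne hUsc)
    (fun e he => mem_iUnion.mpr (exists_mem_sheet_of_isPathConnected hUconn hx he))) hx
  · exact (hW.preimage continuous_proj).inter (isOpen_sheet hU)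
  · rw [← inter_eq_left.mpr hWU, ← proj_image_sheet_of_isPathConnected hUconn (e := ⟨x, v⟩) hx,
      ← image_preimage_inter]
    exact isOpenMap_proj _ hW
  · rw [SurjOn, proj_image_sheet_of_isPathConnected hUconn hx]

theorem isCoveringMap_proj [LocallyPathConnectedSpace X] (hX : SemilocallySimplyConnected X) :
    IsCoveringMap (proj (F := F)) := fun x =>
  have ⟨_, hU, hUconn, hx, hUsc⟩ := hX.exists_isRelSimplyConnected x
  isEvenlyCovered_proj hU hUconn hUsc hx

/-- At time `t` the lift sits over `γ t` and carries `v` transported along `γ` on `[0, t]`. -/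
noncomputable def liftPathFun {a b : X} (γ : Path a b) (v : F.obj (.mk a)) (t : unitInterval) :
    CoveringSpace F :=
  ⟨γ t, F.map (eqToHom (congrArg FundamentalGroupoid.mk γ.source.symm) ≫
    homOfPath (γ.subpath 0 t)) v⟩

lemma liftPathFun_mem_sheet {a b : X} (γ : Path a b) (v : F.obj (.mk a)) {s t : unitInterval}
    (hU : range (γ.subpath s t) ⊆ U) : liftPathFun γ v t ∈ sheet (liftPathFun γ v s) U :=
  ⟨γ.subpath s t, hU, by
    simp only [liftPathFun, ← homOfPath_subpath_comp_subpath γ 0 s t, Functor.map_comp]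
    rfl⟩

lemma continuous_liftPathFun {a b : X} (γ : Path a b) (v : F.obj (.mk a)) :
    Continuous (liftPathFun γ v) := by
  refine isTopologicalBasis_sheet.continuous_iff.mpr ?_
  rintro _ ⟨e, U, hU, rfl⟩
  refine isOpen_iff_mem_nhds.mpr fun t₀ ht₀ => ?_
  have hγU : γ ⁻¹' U ∈ 𝓝 t₀ :=
    γ.continuous.continuousAt.preimage_mem_nhds (hU.mem_nhds (proj_mem_of_mem_sheet ht₀))
  refine Filter.mem_of_superset (ordConnectedComponent_mem_nhds.mpr hγU) fun t ht => ?_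
  rw [mem_preimage, ← sheet_eq_of_mem ht₀]
  refine liftPathFun_mem_sheet γ v ?_
  rw [Path.range_subpath, image_subset_iff]
  exact mem_ordConnectedComponent.mp ht

noncomputable def liftPath {a b : X} (γ : Path a b) (v : F.obj (.mk a)) :
    Path (⟨a, v⟩ : CoveringSpace F) ⟨b, F.map (homOfPath γ) v⟩ where
  toFun := liftPathFun γ v
  continuous_toFun := continuous_liftPathFun γ v
  source' := by simp [liftPathFun, mk_map_eqToHom]
  target' := by
    rw [← mk_map_eqToHom γ.target.symm]
    simp [liftPathFun, homOfPath_cast]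

lemma joined_mk_map (e : CoveringSpace F) {y : X} (q : FundamentalGroupoid.mk e.proj ⟶ .mk y) :
    Joined e ⟨y, F.map q e.fib⟩ := by
  obtain ⟨γ, rfl⟩ := homOfPath_surjective q
  exact ⟨liftPath γ e.fib⟩

theorem mem_range_map_proj_iff (hp : IsCoveringMap (proj (F := F))) (e : CoveringSpace F)
    (q : FundamentalGroup X e.proj) :
    q ∈ (FundamentalGroup.map ⟨proj, continuous_proj⟩ e).range ↔ F.map q e.fib = e.fib := by
  constructor
  · rintro ⟨δ, rfl⟩
    obtain ⟨δ, rfl⟩ := homOfPath_surjective δ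
    set γ := δ.map (continuous_proj (F := F))
    have hlift : ⇑(liftPath γ e.fib) = ⇑δ := hp.eq_of_comp_eq (liftPath γ e.fib).continuous
      δ.continuous rfl 0 ((liftPath γ e.fib).source.trans δ.source.symm)
    have hend : (⟨e.proj, F.map (homOfPath γ) e.fib⟩ : CoveringSpace F) = e := by
      simpa using congrFun hlift 1
    exact eq_of_heq (CoveringSpace.mk.inj hend).2
  · intro hq
    obtain ⟨γ, rfl⟩ := homOfPath_surjective q
    exact ⟨homOfPath ((liftPath γ e.fib).cast rfl (by rw [hq])), rfl⟩

end CoveringSpace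

variable {x₀ : X}

def cosetSetoid (H : Subgroup (FundamentalGroup X x₀)) (x : FundamentalGroupoid X) :
    Setoid (mk x₀ ⟶ x) where
  r g g' := ∃ h ∈ H, g' = h ≫ g
  iseqv.refl g := ⟨1, H.one_mem, (Category.id_comp g).symm⟩
  iseqv.symm := by
    rintro g _ ⟨h, hH, rfl⟩
    refine ⟨h⁻¹, H.inv_mem hH, ?_⟩
    rw [← Category.assoc, show h⁻¹ ≫ h = h * h⁻¹ from rfl, mul_inv_cancel]
    exact (Category.id_comp g).symm
  iseqv.trans := by
    rintro g _ _ ⟨h, hH, rfl⟩ ⟨h', hH', rfl⟩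
    exact ⟨h * h', H.mul_mem hH hH', by simp⟩

noncomputable def cosetFunctor (H : Subgroup (FundamentalGroup X x₀)) :
    FundamentalGroupoid X ⥤ Type u where
  obj x := Quotient (cosetSetoid H x)
  map q := TypeCat.ofHom <| Quotient.map (· ≫ q) fun _ _ ⟨h, hH, hg⟩ => ⟨h, hH, by simp [hg]⟩
  map_id x := by
    ext ⟨g⟩
    exact congrArg (Quotient.mk _) (Category.comp_id g)
  map_comp q q' := by
    ext ⟨g⟩
    exact congrArg (Quotient.mk _) (Category.assoc g q q').symm

lemma cosetFunctor_map_mk_id_eq_iff (H : Subgroup (FundamentalGroup X x₀))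
    (q : FundamentalGroup X x₀) :
    (cosetFunctor H).map q (Quotient.mk _ (𝟙 _)) = Quotient.mk _ (𝟙 _) ↔ q ∈ H := by
  change Quotient.mk _ (𝟙 _ ≫ q) = _ ↔ _
  rw [Category.id_comp, Quotient.eq]
  constructor
  · rintro ⟨h, hH, hq⟩
    rw [eq_inv_of_mul_eq_one_left (show q * h = 1 from hq.symm)]
    exact H.inv_mem hH
  · intro hq
    exact ⟨q⁻¹, H.inv_mem hq, (mul_inv_cancel q).symm⟩

instance (H : Subgroup (FundamentalGroup X x₀)) :
    PathConnectedSpace (CoveringSpace (cosetFunctor H)) := by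
  let e₀ : CoveringSpace (cosetFunctor H) := ⟨x₀, Quotient.mk _ (𝟙 _)⟩
  have hjoined : ∀ e, Joined e₀ e := by
    rintro ⟨x, ⟨g⟩⟩
    have hg : (cosetFunctor H).map g e₀.fib = Quotient.mk _ g :=
      congrArg (Quotient.mk _) (Category.id_comp g)
    have := CoveringSpace.joined_mk_map e₀ g
    rwa [hg] at this
  exact ⟨⟨e₀⟩, fun e e' => (hjoined e).symm.trans (hjoined e')⟩

end FundamentalGroupoid

theorem exists_covering_with_subgroup_general
    {X : Type u} [TopologicalSpace X] (x₀ : X)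
    [LocallyPathConnectedSpace X] (hX : SemilocallySimplyConnected X)
    (H : Subgroup (FundamentalGroup X x₀)) :
    ∃ (E : TopCat.{u}) (p : E → X) (e₀ : E) (hp : IsCoveringMap p)
      (he : p e₀ = x₀), ConnectedSpace E ∧
        (he ▸ (piOneMap p hp.continuous e₀).range : Subgroup (FundamentalGroup X x₀)) = H := by
  open FundamentalGroupoid CoveringSpace in
  let e₀ : CoveringSpace (cosetFunctor H) := ⟨x₀, Quotient.mk _ (𝟙 _)⟩
  have hp := isCoveringMap_proj (F := cosetFunctor H) hX
  refine ⟨TopCat.of (CoveringSpace (cosetFunctor H)), proj, e₀, hp, rfl, inferInstance, ?_⟩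
  ext q
  exact (mem_range_map_proj_iff hp e₀ q).trans (cosetFunctor_map_mk_id_eq_iff H q)

/-- Existence part of the Galois correspondence: over a connected, locally path-connected,
semilocally simply connected pointed space `(X, x₀)`, every subgroup `H` of `π₁(X, x₀)` is the
image of the fundamental group of some pointed connected covering of `(X, x₀)`. -/
theorem exists_covering_with_subgroup
    {X : Type u} [TopologicalSpace X] (x₀ : X)
    [ConnectedSpace X] [LocallyPathConnectedSpace X] (hX : SemilocallySimplyConnected X)
    (H : Subgroup (FundamentalGroup X x₀)) :
    ∃ (E : TopCat.{u}) (p : E → X) (e₀ : E) (hp : IsCoveringMap p)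
      (he : p e₀ = x₀), ConnectedSpace E ∧
        (he ▸ (piOneMap p hp.continuous e₀).range : Subgroup (FundamentalGroup X x₀)) = H :=
  exists_covering_with_subgroup_general x₀ hX H
end

section
/- If p : E → X is a covering map and e₀ ∈ E, then the induced homomorphism p_* : π₁(E, e₀) → π₁(X, p(e₀)) on fundamental groups is injective. -/
open CategoryTheory

universe u

attribute [local instance] Path.Homotopic.setoid

-- `piOneMap p _ e₀` unfolds definitionally to `γ ↦ γ.map ⟨p, _⟩` on homotopy classes of loops.
/-- The homomorphism induced on fundamental groups by a covering map is injective. -/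
theorem coveringMap_pi1_injective {E X : Type u} [TopologicalSpace E] [TopologicalSpace X]
    {p : E → X} (hp : IsCoveringMap p) (e₀ : E) :
    Function.Injective (piOneMap p hp.continuous e₀) :=
  hp.injective_path_homotopic_map e₀ e₀
end

section
/- Let p : E → X be a covering map with E path-connected, let e₀ ∈ E and x₀ = p(e₀). The map sending the right coset p_*(π₁(E, e₀))·[γ] of a loop class [γ] ∈ π₁(X, x₀) to the endpoint γ̃(1) of the unique lift γ̃ of γ with γ̃(0) = e₀ is a well-defined bijection between the coset space π₁(X, x₀) ⧸ p_*(π₁(E, e₀)) and the fiber p⁻¹(x₀). -/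
open CategoryTheory

universe u

attribute [local instance] Path.Homotopic.setoid

/-!
The fundamental group `π₁(X, x₀)` acts on the fiber `p⁻¹(x₀)` by monodromy: `[γ]` sends `e` to the
endpoint of the lift of `γ` starting at `e`. Since Mathlib's product `a * b` runs through `b` first,
this is a left action, so its orbit–stabilizer bijection is with the left-coset space `G ⧸ H`.
The action is transitive because `E` is path-connected (project a path from `e₀` to `e`), and the
stabilizer of `e₀` is `p_*(π₁(E, e₀))`: a loop whose lift closes up is the image of that lift.
-/

open unitInterval

theorem MulAction.exists_quotient_equiv_of_stabilizer_eq {G α : Type*} [Group G] [MulAction G α]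
    [MulAction.IsPretransitive G α] {a : α} {H : Subgroup G} (h : MulAction.stabilizer G a = H) :
    ∃ f : G ⧸ H ≃ α, ∀ g : G, f g = g • a := by
  subst h
  refine ⟨Equiv.ofBijective (MulAction.ofQuotientStabilizer G a)
    ⟨MulAction.injective_ofQuotientStabilizer G a, fun b => ?_⟩, fun g => rfl⟩
  obtain ⟨g, rfl⟩ := MulAction.exists_smul_eq G a b
  exact ⟨g, rfl⟩

namespace IsCoveringMap

variable {E X : Type u} [TopologicalSpace E] [TopologicalSpace X] {p : E → X}

theorem monodromy_mk_eq_of_lifts (hp : IsCoveringMap p) {x y : X} (γ : Path x y) (e : p ⁻¹' {x})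
    (η : C(I, E)) (hη₀ : η 0 = e) (hη : ∀ t, p (η t) = γ t) :
    (hp.monodromy ⟦γ⟧ e : E) = η 1 := by
  have : η = hp.liftPath γ e (γ.source.trans e.2.symm) :=
    (hp.eq_liftPath_iff' _).mpr ⟨funext hη, hη₀⟩
  rw [this]
  rfl

theorem monodromy_eq_self_iff_mem_range (hp : IsCoveringMap p) (e₀ : E)
    (a : FundamentalGroup X (p e₀)) :
    hp.monodromy a ⟨e₀, rfl⟩ = ⟨e₀, rfl⟩ ↔ a ∈ (piOneMap p hp.continuous e₀).range := by
  obtain ⟨γ⟩ := a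
  constructor
  · intro h
    set Γ := hp.liftPath γ e₀ γ.source
    have hΓ₁ : Γ 1 = e₀ := congrArg Subtype.val h
    refine ⟨loopClass ⟨Γ, hp.liftPath_zero .., hΓ₁⟩, ?_⟩
    rw [piOneMap_loopClass]
    congr 1
    ext t
    exact congrFun (hp.liftPath_lifts γ e₀ γ.source) t
  · rintro ⟨⟨α⟩, hα⟩
    rw [← hα]
    exact Subtype.ext <|
      (hp.monodromy_mk_eq_of_lifts _ _ α.toContinuousMap α.source fun _ => rfl).trans α.target

theorem exists_monodromy_eq [PathConnectedSpace E] (hp : IsCoveringMap p) {x : X}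
    (e₀ e : p ⁻¹' {x}) : ∃ a : FundamentalGroup X x, hp.monodromy a e₀ = e := by
  let η := PathConnectedSpace.somePath (e₀ : E) e
  refine ⟨loopClass ((η.map hp.continuous).cast e₀.2.symm e.2.symm), Subtype.ext ?_⟩
  exact (hp.monodromy_mk_eq_of_lifts _ e₀ η.toContinuousMap η.source fun _ => rfl).trans η.target

end IsCoveringMap

/-- For a covering map `p : E → X` with `E` path-connected, `e₀ ∈ E` and `x₀ = p e₀`, the map
sending the coset of a loop class `[γ]` to the endpoint of the unique lift of `γ` starting
at `e₀` is a well-defined bijection from the coset space `π₁(X, x₀) ⧸ p₊(π₁(E, e₀))` to the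
fiber `p⁻¹(x₀)`.  (Since multiplication in Mathlib's `FundamentalGroup` composes loops in the
order opposite to path concatenation, Mathlib's coset space `G ⧸ H` consists exactly of the
right cosets `H·[γ]` of the traditional convention.) -/
theorem coset_space_equiv_fiber {E X : Type u} [TopologicalSpace E] [TopologicalSpace X]
    {p : E → X} (hp : IsCoveringMap p) [PathConnectedSpace E] (e₀ : E) :
    ∃ f : FundamentalGroup X (p e₀) ⧸ (piOneMap p hp.continuous e₀).range ≃
        {e : E // p e = p e₀},
      ∀ (γ : Path (p e₀) (p e₀)) (η : C(unitInterval, E)),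
        η 0 = e₀ → ∀ hηγ : ∀ t, p (η t) = γ t,
          f (QuotientGroup.mk (loopClass γ)) = ⟨η 1, (hηγ 1).trans γ.target⟩ := by
  let := hp.fundamentalGroupMulAction (p e₀)
  have : MulAction.IsPretransitive (FundamentalGroup X (p e₀)) (p ⁻¹' {p e₀}) :=
    ⟨hp.exists_monodromy_eq⟩
  have hstab : MulAction.stabilizer _ (⟨e₀, rfl⟩ : p ⁻¹' {p e₀}) =
      (piOneMap p hp.continuous e₀).range :=
    Subgroup.ext (hp.monodromy_eq_self_iff_mem_range e₀)
  obtain ⟨f, hf⟩ := MulAction.exists_quotient_equiv_of_stabilizer_eq hstab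
  refine ⟨f, fun γ η hη₀ hηγ => Subtype.ext ?_⟩
  exact (congrArg Subtype.val (hf (loopClass γ))).trans
    (hp.monodromy_mk_eq_of_lifts γ _ η hη₀ hηγ)
end

section
/- Let p : E → X be a covering map with E simply connected, let e₀ ∈ E and x₀ = p(e₀). The map sending the class [γ] ∈ π₁(X, x₀) of a loop γ at x₀ to the endpoint γ̃(1) of the unique lift γ̃ of γ with γ̃(0) = e₀ is a bijection between π₁(X, x₀) and the fiber p⁻¹(x₀). -/
open CategoryTheory

universe u

attribute [local instance] Path.Homotopic.setoid

/-! The monodromy of the covering sends the class of a loop `γ` at `x₀` to the endpoint of the lift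
of `γ` from `e₀`. It is onto the fiber because `E` is path-connected: a path in `E` from `e₀` to `e`
projects to a loop whose lift is that path. It is injective because `E` is simply connected: lifts
of `γ` and `γ'` from `e₀` with a common endpoint are homotopic, and projecting such a homotopy
shows `γ ≃ γ'`. -/

open Function unitInterval

namespace IsCoveringMap

variable {E X : Type*} [TopologicalSpace E] [TopologicalSpace X] {p : E → X}

theorem coe_monodromy_mk_eq_of_lifts (cov : IsCoveringMap p) {x y : X} (γ : Path x y)
    (e : p ⁻¹' {x}) (η : C(I, E)) (hη₀ : η 0 = e) (hη : ∀ t, p (η t) = γ t) :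
    (cov.monodromy ⟦γ⟧ e : E) = η 1 := by
  have : η = cov.liftPath γ e (γ.source.trans e.2.symm) :=
    (cov.eq_liftPath_iff' _).mpr ⟨funext hη, hη₀⟩
  exact congr($this 1).symm

theorem monodromy_apply_injective [SimplyConnectedSpace E] (cov : IsCoveringMap p) {x y : X}
    (e : p ⁻¹' {x}) : Injective fun γ : Path.Homotopic.Quotient x y ↦ cov.monodromy γ e := by
  intro γ γ' h
  have hend : (cov.monodromy γ' e : E) = cov.monodromy γ e := congrArg Subtype.val h.symm
  have hlift : (cov.liftPathQuotient γ e).cast rfl hend = cov.liftPathQuotient γ' e :=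
    Subsingleton.elim _ _
  have hmap := congrArg (·.map ⟨p, cov.continuous⟩) hlift
  simp only [Path.Homotopic.Quotient.map_cast, map_liftPathQuotient] at hmap
  refine eq_of_heq <| HEq.trans ?_ <| (heq_of_eq hmap).trans (Path.Homotopic.Quotient.cast_heq ..)
  exact ((Path.Homotopic.Quotient.cast_heq ..).trans (Path.Homotopic.Quotient.cast_heq ..)).symm

theorem monodromy_apply_surjective [PathConnectedSpace E] (cov : IsCoveringMap p) {x y : X}
    (e : p ⁻¹' {x}) : Surjective fun γ : Path.Homotopic.Quotient x y ↦ cov.monodromy γ e := by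
  intro e'
  let Γ : Path.Homotopic.Quotient e.1 e'.1 := ⟦PathConnectedSpace.somePath e.1 e'.1⟧
  exact ⟨(Γ.map ⟨p, cov.continuous⟩).cast e.2.symm e'.2.symm, cov.monodromy_eq_of_map_eq Γ rfl⟩

end IsCoveringMap

/-- For a covering map `p : E → X` with `E` simply connected, `e₀ ∈ E` and `x₀ = p e₀`, the map
sending the class `[γ] ∈ π₁(X, x₀)` of a loop `γ` to the endpoint of the unique lift of `γ`
starting at `e₀` is a bijection from `π₁(X, x₀)` to the fiber `p⁻¹(x₀)`. -/
theorem pi1_equiv_fiber_of_simplyConnected {E X : Type u}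
    [TopologicalSpace E] [TopologicalSpace X]
    {p : E → X} (hp : IsCoveringMap p) [SimplyConnectedSpace E] (e₀ : E) :
    ∃ f : FundamentalGroup X (p e₀) ≃ {e : E // p e = p e₀},
      ∀ (γ : Path (p e₀) (p e₀)) (η : C(unitInterval, E)),
        η 0 = e₀ → ∀ hηγ : ∀ t, p (η t) = γ t,
          f (loopClass γ) = ⟨η 1, (hηγ 1).trans γ.target⟩ := by
  let e₀' : p ⁻¹' {p e₀} := ⟨e₀, rfl⟩
  refine ⟨Equiv.ofBijective (fun γ : FundamentalGroup X (p e₀) ↦ hp.monodromy γ e₀')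
    ⟨hp.monodromy_apply_injective e₀', hp.monodromy_apply_surjective e₀'⟩, fun γ η hη₀ hη ↦ ?_⟩
  exact Subtype.ext (hp.coe_monodromy_mk_eq_of_lifts γ e₀' η hη₀ hη)
end

section
/- Let X be a connected, locally path-connected topological space and p : E → X a covering map with E simply connected and locally path-connected; let e₀ ∈ E and x₀ = p(e₀). Then the deck transformation group of p is isomorphic, as a group, to the fundamental group π₁(X, x₀). -/
open CategoryTheory

universe u

attribute [local instance] Path.Homotopic.setoid

/-- The group of self-homeomorphisms of a space, under composition
(`g * h` is "`h` first, then `g`"). -/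
instance homeomorphGroup (E : Type u) [TopologicalSpace E] : Group (E ≃ₜ E) where
  one := Homeomorph.refl E
  mul g h := h.trans g
  inv := Homeomorph.symm
  mul_assoc _ _ _ := Homeomorph.ext fun _ => rfl
  one_mul _ := Homeomorph.ext fun _ => rfl
  mul_one _ := Homeomorph.ext fun _ => rfl
  inv_mul_cancel g := Homeomorph.ext g.symm_apply_apply

/-- The deck transformation group of `p : E → X`: the group of homeomorphisms `h` of `E`
satisfying `p ∘ h = p`. -/
def deckGroup {E X : Type u} [TopologicalSpace E] [TopologicalSpace X] (p : E → X) :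
    Subgroup (E ≃ₜ E) where
  carrier := {h | ∀ e, p (h e) = p e}
  mul_mem' := fun {g h} hg hh e => (hg (h e)).trans (hh e)
  one_mem' := fun _ => rfl
  inv_mem' := fun {g} hg e => (hg (g.symm e)).symm.trans (congrArg p (g.apply_symm_apply e))

/-- Deck transformations act on the total space by evaluation. -/
instance deckGroupMulAction {E X : Type u} [TopologicalSpace E] [TopologicalSpace X]
    (p : E → X) : MulAction (deckGroup p) E where
  smul h e := h.1 e
  one_smul _ := rfl
  mul_smul _ _ _ := rfl

/-
Since `E` is simply connected, the lifting criterion lifts `p` through itself to a map taking any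
point of a fiber to any other; the composite of two such lifts is a lift of `p` with a fixed point,
hence the identity, so these lifts are deck transformations. Uniqueness of lifts makes the deck
group act freely, so `p` is the quotient of `E` by a free action that is transitive on fibers.
For such a quotient with simply connected total space, monodromy identifies `π₁(X, x₀)` with the
opposite of the acting group, and inversion identifies that with the group itself.
-/

open Function Set

namespace IsCoveringMap

section

variable {E X : Type*} [TopologicalSpace E] [TopologicalSpace X] {p : E → X}

theorem isClosed_range (hp : IsCoveringMap p) : IsClosed (range p) := by
  refine isOpen_compl_iff.mp (isOpen_iff_forall_mem_open.mpr fun x hx => ?_)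
  obtain ⟨-, U, hxU, hU, -, H, -⟩ := hp x
  refine ⟨U, fun y hy ⟨e, he⟩ => ?_, hU, hxU⟩
  -- a point of `p ⁻¹' U` is sent by the trivialization `H` to a point of the fiber over `x`
  exact hx ⟨_, (H ⟨e, show p e ∈ U by rwa [he]⟩).2.2⟩

theorem surjective [ConnectedSpace X] [Nonempty E] (hp : IsCoveringMap p) : Surjective p :=
  range_eq_univ.mp <|
    IsClopen.eq_univ ⟨hp.isClosed_range, hp.isOpenMap.isOpen_range⟩ (range_nonempty p)

end

variable {E X : Type u} [TopologicalSpace E] [TopologicalSpace X] {p : E → X}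

instance : ContinuousConstSMul (deckGroup p) E :=
  ⟨fun g => g.1.continuous⟩

theorem isCancelSMul_deckGroup [PreconnectedSpace E] (hp : IsCoveringMap p) :
    IsCancelSMul (deckGroup p) E where
  right_cancel' g g' e hgg' := Subtype.ext <| Homeomorph.ext <| congrFun <|
    hp.eq_of_comp_eq g.1.continuous g'.1.continuous (funext fun e => (g.2 e).trans (g'.2 e).symm)
      e hgg'

theorem exists_mem_deckGroup_apply_eq [SimplyConnectedSpace E] [LocallyPathConnectedSpace E]
    (hp : IsCoveringMap p) {e₁ e₂ : E} (h : p e₁ = p e₂) : ∃ g ∈ deckGroup p, g e₁ = e₂ := by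
  let pc : C(E, X) := ⟨p, hp.continuous⟩
  obtain ⟨F, ⟨hF, hpF⟩, -⟩ := hp.existsUnique_continuousMap_lifts pc e₁ e₂ h.symm
  obtain ⟨G, ⟨hG, hpG⟩, -⟩ := hp.existsUnique_continuousMap_lifts pc e₂ e₁ h
  have hGF : G ∘ F = id := hp.eq_of_comp_eq (G.continuous.comp F.continuous) continuous_id
    (by rw [← comp_assoc, hpG]; exact hpF) e₁ (by simp [hF, hG])
  have hFG : F ∘ G = id := hp.eq_of_comp_eq (F.continuous.comp G.continuous) continuous_id
    (by rw [← comp_assoc, hpF]; exact hpG) e₂ (by simp [hF, hG])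
  exact ⟨{ toFun := F, invFun := G, left_inv := congrFun hGF, right_inv := congrFun hFG },
    fun e => congrFun hpF e, hF⟩

theorem isQuotientCoveringMap_deckGroup [ConnectedSpace X] [SimplyConnectedSpace E]
    [LocallyPathConnectedSpace E] (hp : IsCoveringMap p) :
    IsQuotientCoveringMap p (deckGroup p) := by
  refine (isQuotientCoveringMap_iff_isCoveringMap_and p _).mpr
    ⟨hp, hp.surjective, inferInstance, hp.isCancelSMul_deckGroup, fun {e₁ e₂} => ⟨fun h => ?_, ?_⟩⟩
  · obtain ⟨g, hg, hge⟩ := hp.exists_mem_deckGroup_apply_eq h.symm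
    exact ⟨⟨g, hg⟩, hge⟩
  · rintro ⟨g, rfl⟩
    exact g.2 e₂

end IsCoveringMap

theorem deckGroup_mulEquiv_pi1_general {E X : Type u} [TopologicalSpace E] [TopologicalSpace X]
    [ConnectedSpace X]
    {p : E → X} (hp : IsCoveringMap p)
    [SimplyConnectedSpace E] [LocallyPathConnectedSpace E] (e₀ : E) :
    Nonempty (deckGroup p ≃* FundamentalGroup X (p e₀)) :=
  ⟨(MulEquiv.inv' _).trans
    (hp.isQuotientCoveringMap_deckGroup.fundamentalGroupEquiv ⟨e₀, rfl⟩).symm⟩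

/-- For a covering map `p : E → X` with `X` connected and locally path-connected and `E` simply
connected and locally path-connected, the deck transformation group of `p` is isomorphic to the
fundamental group `π₁(X, x₀)` where `x₀ = p e₀`. -/
theorem deckGroup_mulEquiv_pi1 {E X : Type u} [TopologicalSpace E] [TopologicalSpace X]
    [ConnectedSpace X] [LocallyPathConnectedSpace X]
    {p : E → X} (hp : IsCoveringMap p)
    [SimplyConnectedSpace E] [LocallyPathConnectedSpace E] (e₀ : E) :
    Nonempty (deckGroup p ≃* FundamentalGroup X (p e₀)) :=
  deckGroup_mulEquiv_pi1_general hp e₀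
end

section
/- Let X be a connected, locally path-connected topological space, and let p : E → X and q : F → X be covering maps with E and F simply connected and locally path-connected. For any e₀ ∈ E and f₀ ∈ F with p(e₀) = q(f₀), there exists a unique homeomorphism h : E ≃ₜ F satisfying q ∘ h = p and h(e₀) = f₀. -/
namespace IsCoveringMap

variable {X E F : Type*} [TopologicalSpace X] [TopologicalSpace E] [TopologicalSpace F]
  {p : E → X} {q : F → X}

theorem leftInverse_of_comp_eq [PreconnectedSpace E] (hp : IsCoveringMap p) {h : C(E, F)}
    {k : C(F, E)} (hh : q ∘ h = p) (hk : p ∘ k = q) {e₀ : E} (he₀ : k (h e₀) = e₀) :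
    Function.LeftInverse k h := by
  have hkh : p ∘ (k ∘ h) = p ∘ id := by rw [← Function.comp_assoc, hk, hh]; rfl
  exact congrFun (hp.eq_of_comp_eq (k.comp h).continuous continuous_id hkh e₀ he₀)

end IsCoveringMap

universe u

theorem universal_coverings_unique_iso_general {X E F : Type u}
    [TopologicalSpace X] [TopologicalSpace E] [TopologicalSpace F]
    {p : E → X} {q : F → X} (hp : IsCoveringMap p) (hq : IsCoveringMap q)
    [SimplyConnectedSpace E] [LocallyPathConnectedSpace E]
    [SimplyConnectedSpace F] [LocallyPathConnectedSpace F]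
    (e₀ : E) (f₀ : F) (hbase : p e₀ = q f₀) :
    ∃! h : E ≃ₜ F, (∀ e, q (h e) = p e) ∧ h e₀ = f₀ := by
  obtain ⟨h, ⟨hh₀, hh⟩, h_unique⟩ :=
    hq.existsUnique_continuousMap_lifts ⟨p, hp.continuous⟩ e₀ f₀ hbase.symm
  obtain ⟨k, ⟨hk₀, hk⟩, -⟩ :=
    hp.existsUnique_continuousMap_lifts ⟨q, hq.continuous⟩ f₀ e₀ hbase
  have hkh : Function.LeftInverse k h := hp.leftInverse_of_comp_eq hh hk (by rw [hh₀, hk₀])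
  have hhk : Function.LeftInverse h k := hq.leftInverse_of_comp_eq hk hh (by rw [hk₀, hh₀])
  refine ⟨⟨⟨h, k, hkh, hhk⟩, h.continuous, k.continuous⟩, ⟨congrFun hh, hh₀⟩, ?_⟩
  rintro h' ⟨hh', hh'₀⟩
  have : (h' : C(E, F)) = h := h_unique _ ⟨hh'₀, funext hh'⟩
  exact Homeomorph.ext fun e ↦ DFunLike.congr_fun this e

/-- Any two pointed universal coverings of a connected, locally path-connected space are
uniquely isomorphic: given covering maps `p : E → X` and `q : F → X` with `E`, `F` simply
connected and locally path-connected, and points `e₀`, `f₀` over the same point of `X`, there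
is a unique homeomorphism `h : E ≃ₜ F` with `q ∘ h = p` and `h e₀ = f₀`. -/
theorem universal_coverings_unique_iso {X E F : Type u}
    [TopologicalSpace X] [TopologicalSpace E] [TopologicalSpace F]
    [ConnectedSpace X] [LocallyPathConnectedSpace X]
    {p : E → X} {q : F → X} (hp : IsCoveringMap p) (hq : IsCoveringMap q)
    [SimplyConnectedSpace E] [LocallyPathConnectedSpace E]
    [SimplyConnectedSpace F] [LocallyPathConnectedSpace F]
    (e₀ : E) (f₀ : F) (hbase : p e₀ = q f₀) :
    ∃! h : E ≃ₜ F, (∀ e, q (h e) = p e) ∧ h e₀ = f₀ :=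
  universal_coverings_unique_iso_general hp hq e₀ f₀ hbase
end

section
/- Let X be a connected, locally path-connected topological space with basepoint x₀. Let p : E → X be a covering map with E simply connected and locally path-connected and e₀ ∈ E with p(e₀) = x₀, and let q : F → X be any covering map with f₀ ∈ F satisfying q(f₀) = x₀. Then there exists a unique continuous map g : E → F such that q ∘ g = p and g(e₀) = f₀. -/
universe u

theorem universal_covering_initial_general {X E F : Type u}
    [TopologicalSpace X] [TopologicalSpace E] [TopologicalSpace F]
    (x₀ : X)
    {p : E → X} {q : F → X} (hp : IsCoveringMap p) (hq : IsCoveringMap q)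
    [SimplyConnectedSpace E] [LocallyPathConnectedSpace E]
    (e₀ : E) (f₀ : F) (hpe : p e₀ = x₀) (hqf : q f₀ = x₀) :
    ∃! g : C(E, F), (∀ e, q (g e) = p e) ∧ g e₀ = f₀ := by
  obtain ⟨g, ⟨hg₀, hqg⟩, huniq⟩ :=
    hq.existsUnique_continuousMap_lifts ⟨p, hp.continuous⟩ e₀ f₀ (hqf.trans hpe.symm)
  exact ⟨g, ⟨congrFun hqg, hg₀⟩, fun g' ⟨hqg', hg'₀⟩ ↦ huniq g' ⟨hg'₀, funext hqg'⟩⟩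

/-- The pointed universal covering is initial among pointed coverings: if `p : E → X` is a
covering map with `E` simply connected and locally path-connected, `X` is connected and locally
path-connected, and `q : F → X` is any covering map, then for basepoints `e₀`, `f₀` over
`x₀` there is a unique continuous map `g : E → F` with `q ∘ g = p` and `g e₀ = f₀`. -/
theorem universal_covering_initial {X E F : Type u}
    [TopologicalSpace X] [TopologicalSpace E] [TopologicalSpace F]
    [ConnectedSpace X] [LocallyPathConnectedSpace X] (x₀ : X)
    {p : E → X} {q : F → X} (hp : IsCoveringMap p) (hq : IsCoveringMap q)
    [SimplyConnectedSpace E] [LocallyPathConnectedSpace E]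
    (e₀ : E) (f₀ : F) (hpe : p e₀ = x₀) (hqf : q f₀ = x₀) :
    ∃! g : C(E, F), (∀ e, q (g e) = p e) ∧ g e₀ = f₀ :=
  universal_covering_initial_general x₀ hp hq e₀ f₀ hpe hqf
end

section
/- Let p : E → X be a covering map, e₀ ∈ E and x₀ = p(e₀). For every n ≥ 2, the map πₙ(E, e₀) → πₙ(X, x₀) induced by postcomposition with p (sending the based homotopy class of a based map γ : (Iⁿ, ∂Iⁿ) → (E, e₀) to the class of p ∘ γ) is a group isomorphism, i.e., it is a bijective group homomorphism. -/
open scoped Topology Topology.Homotopy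

universe u

/-- The map induced on `N`-th homotopy groups by postcomposition with a continuous map `f`:
it sends the based homotopy class of `γ : (I^N, ∂I^N) → (E, e₀)` to the class of `f ∘ γ`. -/
noncomputable def homotopyGroupMap (N : Type) [DecidableEq N]
    {E X : Type u} [TopologicalSpace E] [TopologicalSpace X] (f : C(E, X)) (e₀ : E) :
    HomotopyGroup N E e₀ → HomotopyGroup N X (f e₀) :=
  Quotient.map
    (fun γ => ⟨f.comp γ.1, fun y hy => congrArg f (γ.2 y hy)⟩)
    (fun _ _ h => h.map fun H => H.compContinuousMap f)

/-!
The cube `Iᴺ` is homeomorphic to a convex subset of `ℝᴺ`, hence simply connected and locally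
path-connected, so a generalized loop `γ : (Iᴺ, ∂Iᴺ) → (X, p e₀)` lifts through `p` to a map
sending `0` to `e₀`. When `N` has at least two elements the boundary `∂Iᴺ` is connected and `γ`
maps it to a point, so the lift is constant on it, the fibres of `p` being discrete: this is
surjectivity. Injectivity is the lifting of homotopies rel `∂Iᴺ`, and postcomposition commutes
with concatenation of generalized loops.
-/

open scoped unitInterval
open Topology

section Cube

variable (N : Type*)

noncomputable def cubeHomeomorphPiIcc : (N → I) ≃ₜ Set.univ.pi fun _ : N => Set.Icc (0 : ℝ) 1 :=
  (IsEmbedding.piMap fun _ => IsEmbedding.subtypeVal).toHomeomorph.trans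
    (Homeomorph.setCongr (by rw [Set.range_piMap, Subtype.range_coe]))

theorem convex_pi_Icc : Convex ℝ (Set.univ.pi fun _ : N => Set.Icc (0 : ℝ) 1) :=
  convex_pi fun _ _ => convex_Icc 0 1

instance : ContractibleSpace (N → I) :=
  haveI := (convex_pi_Icc N).contractibleSpace ⟨0, fun _ _ => Set.left_mem_Icc.2 zero_le_one⟩
  (cubeHomeomorphPiIcc N).contractibleSpace

instance : LocallyPathConnectedSpace (N → I) :=
  haveI := (convex_pi_Icc N).locallyPathConnectedSpace
  (cubeHomeomorphPiIcc N).isOpenEmbedding.locallyPathConnectedSpace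

theorem isPreconnected_setOf_apply_eq (i : N) (t : I) :
    IsPreconnected {y : N → I | y i = t} := by
  classical
  have : {y : N → I | y i = t} = Set.range (Function.update · i t) :=
    Set.ext fun y => ⟨fun hy => ⟨y, hy ▸ Function.update_eq_self i y⟩,
      by rintro ⟨y, rfl⟩; exact Function.update_self i t y⟩
  exact this ▸ isPreconnected_range (by fun_prop)

theorem Cube.isPreconnected_boundary [Nontrivial N] : IsPreconnected (Cube.boundary N) := by
  classical
  -- The face `{z | z i = y i}` through a boundary point `y` meets the face `{z | z j = 0}`
  -- through `0`, for any `j ≠ i`.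
  refine isPreconnected_of_forall 0 fun y ⟨i, hi⟩ => ?_
  obtain ⟨j, hji⟩ := exists_ne i
  refine ⟨{z | z i = y i} ∪ {z | z j = 0}, ?_, Or.inr rfl, Or.inl rfl, ?_⟩
  · rintro z (hz | hz)
    · exact ⟨i, hz ▸ hi⟩
    · exact ⟨j, Or.inl hz⟩
  · exact IsPreconnected.union (Function.update (0 : N → I) i (y i)) (Function.update_self i _ _)
      (Function.update_of_ne hji _ _) (isPreconnected_setOf_apply_eq N i (y i))
      (isPreconnected_setOf_apply_eq N j 0)

theorem Cube.zero_mem_boundary [Nonempty N] : (0 : N → I) ∈ Cube.boundary N :=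
  ⟨Classical.arbitrary N, Or.inl rfl⟩

end Cube

section GenLoop

variable {N : Type*} {E X : Type*} [TopologicalSpace E] [TopologicalSpace X] {e₀ : E}

def GenLoop.map (f : C(E, X)) (γ : Ω^ N E e₀) : Ω^ N X (f e₀) :=
  ⟨f.comp γ, fun y hy => congrArg f (γ.2 y hy)⟩

theorem GenLoop.map_transAt [DecidableEq N] (f : C(E, X)) (i : N) (γ δ : Ω^ N E e₀) :
    GenLoop.map f (GenLoop.transAt i γ δ) =
      GenLoop.transAt i (GenLoop.map f γ) (GenLoop.map f δ) := by
  ext y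
  change f (GenLoop.transAt i γ δ y) = _
  simp only [GenLoop.transAt, GenLoop.coe_copy]
  split_ifs <;> rfl

theorem IsCoveringMap.exists_genLoop_lift [Nontrivial N] {p : E → X} (hp : IsCoveringMap p)
    (γ : Ω^ N X (p e₀)) : ∃ Γ : Ω^ N E e₀, p ∘ Γ = γ := by
  have h0 := Cube.zero_mem_boundary N
  obtain ⟨Γ, ⟨hΓ0, hΓ⟩, -⟩ := hp.existsUnique_continuousMap_lifts γ.1 0 e₀ (γ.2 0 h0).symm
  refine ⟨⟨Γ, fun y hy => ?_⟩, hΓ⟩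
  rw [← hΓ0]
  refine hp.constOn_of_comp (Cube.isPreconnected_boundary N) Γ.continuous.continuousOn
    (fun a ha b hb => ?_) hy h0
  simp only [← Function.comp_apply (f := p), hΓ]
  exact (γ.2 a ha).trans (γ.2 b hb).symm

end GenLoop

section HomotopyGroupMap

variable {N : Type} [DecidableEq N] {E X : Type u} [TopologicalSpace E] [TopologicalSpace X]
  {e₀ : E}

theorem homotopyGroupMap_mk (f : C(E, X)) (γ : Ω^ N E e₀) :
    homotopyGroupMap N f e₀ ⟦γ⟧ = ⟦GenLoop.map f γ⟧ :=
  rfl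

theorem homotopyGroupMap_mul [Nonempty N] (f : C(E, X)) (a b : HomotopyGroup N E e₀) :
    homotopyGroupMap N f e₀ (a * b) = homotopyGroupMap N f e₀ a * homotopyGroupMap N f e₀ b := by
  induction a, b using Quotient.inductionOn₂ with | _ γ δ => ?_
  refine (congrArg (homotopyGroupMap N f e₀)
    (HomotopyGroup.mul_spec (i := Classical.arbitrary N))).trans ?_
  rw [homotopyGroupMap_mk, GenLoop.map_transAt]
  exact HomotopyGroup.mul_spec.symm

variable {p : E → X}

theorem IsCoveringMap.homotopyGroupMap_injective [Nonempty N] (hp : IsCoveringMap p) :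
    Function.Injective (homotopyGroupMap N ⟨p, hp.continuous⟩ e₀) := by
  refine Quotient.ind₂ fun γ δ h => Quotient.sound ?_
  have hγδ : γ 0 = δ 0 :=
    (γ.2 0 (Cube.zero_mem_boundary N)).trans (δ.2 0 (Cube.zero_mem_boundary N)).symm
  exact (hp.homotopicRel_iff_comp ⟨0, Cube.zero_mem_boundary N, hγδ⟩).2 (Quotient.exact h)

theorem IsCoveringMap.homotopyGroupMap_surjective [Nontrivial N] (hp : IsCoveringMap p) :
    Function.Surjective (homotopyGroupMap N ⟨p, hp.continuous⟩ e₀) := by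
  refine Quotient.ind fun γ => ?_
  obtain ⟨Γ, hΓ⟩ := hp.exists_genLoop_lift γ
  exact ⟨⟦Γ⟧, congrArg _ (Subtype.ext (ContinuousMap.coe_injective hΓ))⟩

end HomotopyGroupMap

/-- A covering map induces an isomorphism on all homotopy groups `πₙ` for `n ≥ 2`
(here an arbitrary `n ≥ 2` is written as `n + 2`): the induced map is a bijective group
homomorphism. -/
theorem coveringMap_homotopyGroup_iso {E X : Type u}
    [TopologicalSpace E] [TopologicalSpace X]
    {p : E → X} (hp : IsCoveringMap p) (e₀ : E) (n : ℕ) :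
    Function.Bijective (homotopyGroupMap (Fin (n + 2)) ⟨p, hp.continuous⟩ e₀) ∧
      ∀ a b : HomotopyGroup (Fin (n + 2)) E e₀,
        homotopyGroupMap (Fin (n + 2)) ⟨p, hp.continuous⟩ e₀ (a * b) =
          homotopyGroupMap (Fin (n + 2)) ⟨p, hp.continuous⟩ e₀ a *
            homotopyGroupMap (Fin (n + 2)) ⟨p, hp.continuous⟩ e₀ b :=
  ⟨⟨hp.homotopyGroupMap_injective, hp.homotopyGroupMap_surjective⟩, homotopyGroupMap_mul _⟩
end

section
/- Let X be a connected, locally path-connected topological space and p : E → X a covering map with E simply connected and locally path-connected. Let G be the deck transformation group of p and H a subgroup of G, acting on E by h · e = h(e). Then: (1) the canonical quotient map E → E ⧸ H onto the orbit space (with quotient topology) is a covering map; and (2) the map E ⧸ H → X induced by p (well-defined since p is constant on H-orbits) is a covering map with connected total space E ⧸ H. -/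
universe u

/-!
Deck transformations of a covering with connected total space act freely: a lift of `p` that
agrees with the identity at one point is the identity. Since `p` is locally injective, an open set
on which `p` is injective meets none of its nontrivial translates, so `E → E ⧸ H` is a covering.
For the induced map `E ⧸ H → X`, take a connected open set `V` over which `p` is trivial: a deck
transformation maps each (connected) sheet over `V` into a single sheet, so the images of the
sheets in `E ⧸ H` are pairwise equal or disjoint, and each of them is mapped bijectively, openly
and continuously onto `V`.
-/

open Set MulAction Topology Bundle

lemma isOpen_iff_isOpen_preimage_inter {Y Z : Type*} [TopologicalSpace Y] [TopologicalSpace Z]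
    {f : Y → Z} (hf : Continuous f) (hf' : IsOpenMap f) {A : Set Y} (hA : IsOpen A) {W : Set Z}
    (hW : W ⊆ f '' A) : IsOpen W ↔ IsOpen (f ⁻¹' W ∩ A) := by
  refine ⟨fun h => (h.preimage hf).inter hA, fun h => ?_⟩
  rw [← inter_eq_left.mpr hW, ← image_preimage_inter]
  exact hf' _ h

lemma IsEvenlyCovered.of_comp_of_isEmpty {E X Y I : Type*} [TopologicalSpace E] [TopologicalSpace X]
    [TopologicalSpace Y] [TopologicalSpace I] [IsEmpty I] {q : E → Y} (hq : Function.Surjective q)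
    {f : Y → X} {x : X} (h : IsEvenlyCovered (f ∘ q) x I) :
    IsEvenlyCovered f x (f ⁻¹' {x}) := by
  obtain ⟨-, U, hxU, hU, -, Φ, -⟩ := h
  have hfU : f ⁻¹' U = ∅ := eq_empty_of_forall_notMem fun y hy => by
    obtain ⟨e, rfl⟩ := hq y
    exact isEmptyElim (Φ ⟨e, hy⟩).2
  have : IsEmpty (f ⁻¹' {x}) :=
    ⟨fun ⟨y, hy⟩ => hfU.subset (show f y ∈ U from (mem_singleton_iff.mp hy).symm ▸ hxU)⟩
  exact .of_preimage_eq_empty _ (hU.mem_nhds hxU) hfU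

namespace Bundle.Trivialization

variable {E X F : Type*} [TopologicalSpace E] [TopologicalSpace X] [TopologicalSpace F]
  {p : E → X} (t : Trivialization F p) {V : Set X} {i : F}

def sheet (V : Set X) (i : F) : Set E := t.source ∩ t ⁻¹' (V ×ˢ {i})

lemma mem_sheet_iff {a : E} : a ∈ t.sheet V i ↔ a ∈ t.source ∧ p a ∈ V ∧ (t a).2 = i :=
  and_congr_right fun ha => by rw [mem_preimage, mem_prod, t.coe_fst ha]; rfl

lemma mem_sheet_of_mem_source {a : E} (ha : a ∈ t.source) (haV : p a ∈ V) :
    a ∈ t.sheet V (t a).2 :=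
  t.mem_sheet_iff.mpr ⟨ha, haV, rfl⟩

lemma isOpen_sheet [DiscreteTopology F] (hV : IsOpen V) : IsOpen (t.sheet V i) :=
  t.continuousOn_toFun.isOpen_inter_preimage t.open_source (hV.prod (isOpen_discrete _))

lemma isPreconnected_sheet (hVt : V ⊆ t.baseSet) (hV : IsPreconnected V) :
    IsPreconnected (t.sheet V i) := by
  have hsub : V ×ˢ {i} ⊆ t.target := by
    rw [t.target_eq]; exact prod_mono hVt (subset_univ _)
  change IsPreconnected (t.toOpenPartialHomeomorph.source ∩ t.toOpenPartialHomeomorph ⁻¹' _)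
  rw [← t.toOpenPartialHomeomorph.symm_image_eq_source_inter_preimage hsub]
  exact (hV.prod isPreconnected_singleton).image _
    (t.toOpenPartialHomeomorph.continuousOn_symm.mono hsub)

lemma injOn_sheet : (t.sheet V i).InjOn p := fun a ha b hb hab => by
  rw [mem_sheet_iff] at ha hb
  refine t.injOn ha.1 hb.1 (Prod.ext ?_ (ha.2.2.trans hb.2.2.symm))
  exact (t.coe_fst ha.1).trans (hab.trans (t.coe_fst hb.1).symm)

lemma surjOn_sheet (hVt : V ⊆ t.baseSet) : SurjOn p (t.sheet V i) V := fun x hx => by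
  have hxt : (x, i) ∈ t.target := by rw [t.target_eq]; exact ⟨hVt hx, trivial⟩
  refine ⟨t.toOpenPartialHomeomorph.symm (x, i), ⟨t.map_target hxt, ?_⟩,
    t.proj_symm_apply hxt⟩
  rw [mem_preimage, t.apply_symm_apply hxt]
  exact ⟨hx, rfl⟩

lemma mapsTo_sheet [DiscreteTopology F] (hVt : V ⊆ t.baseSet) (hV : IsPreconnected V)
    {φ : E → E} (hφ : Continuous φ) (hpφ : ∀ a, p (φ a) = p a) {j : F} {a : E}
    (ha : a ∈ t.sheet V i) (hφa : φ a ∈ t.sheet V j) :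
    MapsTo φ (t.sheet V i) (t.sheet V j) := by
  have hsrc : MapsTo φ (t.sheet V i) t.source := fun b hb =>
    t.mem_source.mpr (hVt ((hpφ b).symm ▸ (t.mem_sheet_iff.mp hb).2.1))
  intro b hb
  have hidx : (t (φ b)).2 = (t (φ a)).2 :=
    (isPreconnected_sheet t hVt hV).constant
      (continuous_snd.comp_continuousOn (t.continuousOn_toFun.comp hφ.continuousOn hsrc)) hb ha
  refine t.mem_sheet_iff.mpr ⟨hsrc hb, (hpφ b).symm ▸ (t.mem_sheet_iff.mp hb).2.1, ?_⟩
  rw [hidx]; exact (t.mem_sheet_iff.mp hφa).2.2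

end Bundle.Trivialization

section OrbitSpace

variable {E X G : Type*} [TopologicalSpace E] [Group G] [MulAction G E] [ContinuousConstSMul G E]
  {p : E → X}

theorem isQuotientCoveringMap_quotientMk_of_isLocallyInjective (hp : IsLocallyInjective p)
    (hpG : ∀ (g : G) (e : E), p (g • e) = p e)
    (hfree : ∀ (g : G) (e : E), g • e = e → g = 1) :
    IsQuotientCoveringMap (Quotient.mk (orbitRel G E)) G where
  toIsQuotientMap := isQuotientMap_quotient_mk'
  apply_eq_iff_mem_orbit := Quotient.eq
  disjoint e := by
    obtain ⟨U, hU, he, hinj⟩ := hp e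
    exact ⟨U, hU.mem_nhds he, fun (g : G) ⟨_, ⟨u, hu, rfl⟩, hgu⟩ =>
      hfree g u (hinj hgu hu (hpG g u))⟩

variable [TopologicalSpace X] (hpG : ∀ (g : G) (e : E), p (g • e) = p e)
include hpG

lemma mk_image_sheet_subset {F : Type*} [TopologicalSpace F] [DiscreteTopology F]
    {t : Trivialization F p} {V : Set X} (hVt : V ⊆ t.baseSet) (hV : IsPreconnected V)
    {i j : F} {a b : E} (ha : a ∈ t.sheet V i) (hb : b ∈ t.sheet V j)
    (hab : (⟦a⟧ : Quotient (orbitRel G E)) = ⟦b⟧) :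
    Quotient.mk (orbitRel G E) '' t.sheet V i ⊆ Quotient.mk (orbitRel G E) '' t.sheet V j := by
  obtain ⟨g, rfl⟩ := Quotient.exact hab.symm
  have hmaps := t.mapsTo_sheet hVt hV (continuous_const_smul g) (hpG g) ha hb
  rintro _ ⟨a', ha', rfl⟩
  exact ⟨g • a', hmaps ha', Quotient.sound ⟨g, rfl⟩⟩

lemma mk_image_sheet_eq_or_disjoint {F : Type*} [TopologicalSpace F] [DiscreteTopology F]
    {t : Trivialization F p} {V : Set X} (hVt : V ⊆ t.baseSet) (hV : IsPreconnected V) (i j : F) :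
    Quotient.mk (orbitRel G E) '' t.sheet V i = Quotient.mk (orbitRel G E) '' t.sheet V j ∨
      Disjoint (Quotient.mk (orbitRel G E) '' t.sheet V i)
        (Quotient.mk (orbitRel G E) '' t.sheet V j) := by
  refine or_iff_not_imp_right.mpr fun h => ?_
  obtain ⟨_, ⟨a, ha, rfl⟩, b, hb, hab⟩ := not_disjoint_iff.mp h
  exact (mk_image_sheet_subset hpG hVt hV ha hb hab.symm).antisymm
    (mk_image_sheet_subset hpG hVt hV hb ha hab)

lemma isEvenlyCovered_of_comp_mk_eq_of_trivialization [LocallyConnectedSpace X]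
    {f : Quotient (orbitRel G E) → X} (hf : f ∘ Quotient.mk _ = p) (hp : IsCoveringMap p)
    {F : Type*} [TopologicalSpace F] [DiscreteTopology F] [Nonempty F] (t : Trivialization F p)
    {x₀ : X} (hx₀ : x₀ ∈ t.baseSet) : IsEvenlyCovered f x₀ (f ⁻¹' {x₀}) := by
  set q := Quotient.mk (orbitRel G E)
  have hq : IsOpenMap q := isOpenMap_quotient_mk'_mul
  have hfc : Continuous f := isQuotientMap_quotient_mk'.continuous_iff.mpr (hf ▸ hp.continuous)
  have hfo : IsOpenMap f :=
    .of_comp continuous_quotient_mk' Quotient.mk_surjective (hf ▸ hp.isOpenMap)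
  set V := connectedComponentIn t.baseSet x₀
  have hVo : IsOpen V := t.open_baseSet.connectedComponentIn
  have hVt : V ⊆ t.baseSet := connectedComponentIn_subset _ _
  have hV : IsPreconnected V := isPreconnected_connectedComponentIn
  -- the fibre of `f` over `V` is indexed by the images of the sheets, which partition `f ⁻¹' V`
  let ι := range fun i => q '' t.sheet V i
  let : TopologicalSpace ι := ⊥
  have : DiscreteTopology ι := ⟨rfl⟩
  obtain ⟨i₀⟩ := ‹Nonempty F›
  have : Nonempty ι := ⟨⟨_, i₀, rfl⟩⟩
  have : Nonempty (X → Quotient (orbitRel G E)) :=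
    ⟨fun x => q (t.toOpenPartialHomeomorph.symm (x, i₀))⟩
  have hsurj (i) : SurjOn f (q '' t.sheet V i) V := by
    rw [SurjOn, image_image]; exact hf ▸ t.surjOn_sheet hVt
  refine .to_isEvenlyCovered_preimage <| .of_trivialization (t := IsOpen.trivializationDiscrete
    (Subtype.val : ι → _) V hVo ?_ ?_ ?_ ?_ ?_) (mem_connectedComponentIn hx₀)
  · rintro ⟨_, i, rfl⟩ W hW
    exact isOpen_iff_isOpen_preimage_inter hfc hfo (hq _ (t.isOpen_sheet hVo)) (hW.trans (hsurj i))
  · rintro ⟨_, i, rfl⟩ _ ⟨a, ha, rfl⟩ _ ⟨b, hb, rfl⟩ hab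
    exact congrArg q (t.injOn_sheet ha hb (hf ▸ hab))
  · rintro ⟨_, i, rfl⟩
    exact hsurj i
  · rintro ⟨_, i, rfl⟩ ⟨_, j, rfl⟩ hij
    exact (mk_image_sheet_eq_or_disjoint hpG hVt hV i j).resolve_left fun h => hij (Subtype.ext h)
  · intro z hz
    induction z using Quotient.inductionOn with | h a => ?_
    have ha : p a ∈ V := hf ▸ hz
    exact mem_iUnion.mpr ⟨⟨_, (t a).2, rfl⟩, a,
      t.mem_sheet_of_mem_source (t.mem_source.mpr (hVt ha)) ha, rfl⟩

omit hpG in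
theorem isCoveringMap_of_comp_mk_eq [LocallyConnectedSpace X] {f : Quotient (orbitRel G E) → X}
    (hf : f ∘ Quotient.mk _ = p) (hp : IsCoveringMap p) : IsCoveringMap f := by
  have hpG (g : G) (e : E) : p (g • e) = p e := by
    rw [← hf]; exact congrArg f (Quotient.sound ⟨g, rfl⟩)
  intro x₀
  rcases isEmpty_or_nonempty (p ⁻¹' {x₀}) with hempty | hne
  · subst hf
    exact .of_comp_of_isEmpty Quotient.mk_surjective (hp x₀)
  · have := (hp x₀).discreteTopology_fiber
    exact isEvenlyCovered_of_comp_mk_eq_of_trivialization hpG hf hp _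
      (hp x₀).mem_toTrivialization_baseSet

end OrbitSpace

section DeckGroup

variable {E X : Type u} [TopologicalSpace E] [TopologicalSpace X] {p : E → X}

instance deckGroup.continuousConstSMul (H : Subgroup (deckGroup p)) : ContinuousConstSMul H E :=
  ⟨fun g => (g : deckGroup p).1.continuous⟩

lemma IsCoveringMap.eq_one_of_deckGroup_apply_eq [PreconnectedSpace E] (hp : IsCoveringMap p)
    {g : deckGroup p} {e : E} (he : g.1 e = e) : g = 1 :=
  Subtype.ext <| Homeomorph.ext <| congrFun <|
    hp.eq_of_comp_eq g.1.continuous continuous_id (funext g.2) e he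

end DeckGroup

/-- For a covering map `p : E → X` with `X` connected and locally path-connected, `E` simply
connected and locally path-connected, and a subgroup `H` of the deck transformation group of
`p`: (1) the canonical map from `E` to the orbit space `E ⧸ H` (with the quotient topology) is
a covering map, and (2) the map `E ⧸ H → X` induced by `p` is a covering map whose total space
`E ⧸ H` is connected. -/
theorem orbit_space_of_deck_subgroup_coverings {E X : Type u}
    [TopologicalSpace E] [TopologicalSpace X]
    [LocallyPathConnectedSpace X]
    {p : E → X} (hp : IsCoveringMap p)
    [SimplyConnectedSpace E]
    (H : Subgroup (deckGroup p)) :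
    IsCoveringMap (Quotient.mk (MulAction.orbitRel H E)) ∧
      IsCoveringMap
        (Quotient.lift (s := MulAction.orbitRel H E) p
          (fun a b h => by obtain ⟨g, rfl⟩ := h; exact g.1.2 b)) ∧
      ConnectedSpace (Quotient (MulAction.orbitRel H E)) := by
  have hpH : ∀ (g : H) (e : E), p (g • e) = p e := fun g => (g : deckGroup p).2
  have hfree (g : H) (e : E) (he : g • e = e) : g = 1 :=
    Subtype.ext (hp.eq_one_of_deckGroup_apply_eq he)
  exact ⟨(isQuotientCoveringMap_quotientMk_of_isLocallyInjective
      hp.isLocalHomeomorph.isLocallyInjective hpH hfree).isCoveringMap,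
    isCoveringMap_of_comp_mk_eq rfl hp, inferInstance⟩
end

section
/- Let p : E → Circle be a covering map, where Circle is the unit circle in ℂ, with E connected and locally path-connected. Then either there exists a homeomorphism h : ℝ ≃ₜ E such that p(h(t)) = exp(t·i) for all t ∈ ℝ, or there exist a positive integer n and a homeomorphism h : Circle ≃ₜ E such that p(h(z)) = zⁿ for all z ∈ Circle. -/
/-!
Lift `exp : ℝ → Circle` through `p` to `f : ℝ → E`, which is possible since `ℝ` is simply
connected. As `E` is path-connected, path lifting shows that `f` is surjective; being also a
local homeomorphism, `f` is a quotient map. By uniqueness of lifts, `f t = f s` exactly when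
`t - s` is a period of `f`, and the periods form a subgroup of `2πℤ`, hence equal `2πnℤ` for some
`n : ℕ`. So `E ≃ₜ ℝ` if `n = 0`, and otherwise `E ≃ₜ ℝ ⧸ 2πnℤ ≃ₜ Circle` via `t ↦ exp (t / n)`,
under which `p` becomes `z ↦ z ^ n`.
-/

open Function Topology AddSubgroup
open scoped Real

theorem Topology.IsQuotientMap.exists_homeomorph_comp_eq {X Y Z : Type*} [TopologicalSpace X]
    [TopologicalSpace Y] [TopologicalSpace Z] {q : X → Y} {f : X → Z} (hq : IsQuotientMap q)
    (hf : IsQuotientMap f) (hfib : ∀ x y, q x = q y ↔ f x = f y) :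
    ∃ φ : Y ≃ₜ Z, φ ∘ q = f := by
  have hf_q : FactorsThrough f q := fun x y hxy => (hfib x y).1 hxy
  have hq_f : FactorsThrough q f := fun x y hxy => (hfib x y).2 hxy
  let φ : C(Y, Z) := hq.lift (f := ⟨q, hq.continuous⟩) ⟨f, hf.continuous⟩ hf_q
  let ψ : C(Z, Y) := hf.lift (f := ⟨f, hf.continuous⟩) ⟨q, hq.continuous⟩ hq_f
  have hφ : φ ∘ q = f :=
    congrArg DFunLike.coe (hq.lift_comp (f := ⟨q, hq.continuous⟩) ⟨f, hf.continuous⟩ hf_q)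
  have hψ : ψ ∘ f = q :=
    congrArg DFunLike.coe (hf.lift_comp (f := ⟨f, hf.continuous⟩) ⟨q, hq.continuous⟩ hq_f)
  refine ⟨⟨⟨φ, ψ, fun y => ?_, fun z => ?_⟩, φ.continuous, ψ.continuous⟩, hφ⟩
  · obtain ⟨x, rfl⟩ := hq.surjective y
    exact (congrArg ψ (congrFun hφ x)).trans (congrFun hψ x)
  · obtain ⟨x, rfl⟩ := hf.surjective z
    exact (congrArg φ (congrFun hψ x)).trans (congrFun hφ x)

def Function.periods {G α : Type*} [AddGroup G] (f : G → α) : AddSubgroup G where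
  carrier := {c | Periodic f c}
  add_mem' := Periodic.add_period
  zero_mem' := fun x => by rw [add_zero]
  neg_mem' := Periodic.neg

theorem AddSubgroup.exists_eq_zmultiples_nsmul_of_le_zmultiples {G : Type*} [AddGroup G]
    {a : G} {S : AddSubgroup G} (hS : S ≤ zmultiples a) : ∃ n : ℕ, S = zmultiples (n • a) := by
  obtain ⟨k, hk⟩ := Int.subgroup_cyclic (S.comap (zmultiplesHom G a))
  refine ⟨k.natAbs, ?_⟩
  have hS_map : (S.comap (zmultiplesHom G a)).map (zmultiplesHom G a) = S :=
    map_comap_eq_self (by rwa [range_zmultiplesHom])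
  rw [← hS_map, hk, ← zmultiples_eq_closure, ← Int.zmultiples_natAbs,
    AddMonoidHom.map_zmultiples, zmultiplesHom_apply, natCast_zsmul]

namespace IsCoveringMap

variable {E X A : Type*} [TopologicalSpace E] [TopologicalSpace X] [TopologicalSpace A]
  {p : E → X} {q : A → X} {f : A → E}

theorem surjective_of_comp_eq [PathConnectedSpace E] [Nonempty A] (hp : IsCoveringMap p)
    (hq : IsCoveringMap q) (hf : Continuous f) (hpf : p ∘ f = q) : Surjective f := by
  obtain ⟨a⟩ := ‹Nonempty A›
  intro e
  let γ := PathConnectedSpace.somePath (f a) e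
  have hγ0 : (⟨p, hp.continuous⟩ : C(E, X)).comp γ.toContinuousMap 0 = q a := by simp [← hpf]
  let Γ := hq.liftPath _ a hγ0
  -- `f ∘ Γ` and `γ` both lift `p ∘ γ` starting at `f a`
  have hfΓ : f ∘ Γ = γ := by
    refine hp.eq_of_comp_eq (hf.comp Γ.continuous) γ.continuous ?_ 0 ?_
    · rw [← comp_assoc, hpf, hq.liftPath_lifts]
      rfl
    · simp [Γ, hq.liftPath_zero]
  exact ⟨Γ 1, by simpa using congrFun hfΓ 1⟩

theorem isQuotientMap_of_comp_eq [PathConnectedSpace E] [Nonempty A] (hp : IsCoveringMap p)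
    (hq : IsCoveringMap q) (hf : Continuous f) (hpf : p ∘ f = q) : IsQuotientMap f :=
  (IsLocalHomeomorph.of_comp (hpf ▸ hq.isLocalHomeomorph) hp.isLocalHomeomorph hf).isOpenMap
    |>.isQuotientMap hf (hp.surjective_of_comp_eq hq hf hpf)

end IsCoveringMap

namespace Circle

theorem isQuotientMap_exp_div_natCast {n : ℕ} (hn : n ≠ 0) :
    IsQuotientMap fun t : ℝ => exp (t / n) := by
  simp_rw [div_eq_mul_inv]
  exact isAddQuotientCoveringMap_exp.toIsQuotientMap.comp
    (Homeomorph.mulRight₀ (n : ℝ)⁻¹ (by positivity)).isQuotientMap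

theorem exp_div_natCast_eq_iff {n : ℕ} (hn : n ≠ 0) {t s : ℝ} :
    exp (t / n) = exp (s / n) ↔ t ≡ s [PMOD n • (2 * π)] := by
  rw [exp_inj, AddCommGroup.div_modEq_div (Nat.cast_ne_zero.2 hn), nsmul_eq_mul, mul_comm]

variable {E : Type*} {p : E → Circle} {f : ℝ → E}

theorem periods_le_zmultiples_of_comp_eq_exp (hpf : p ∘ f = exp) :
    periods f ≤ zmultiples (2 * π) := by
  intro c hc
  have hc1 : exp c = 1 := by
    rw [← exp_zero, ← hpf, comp_apply, comp_apply, ← hc 0, zero_add]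
  obtain ⟨m, rfl⟩ := exp_eq_one.1 hc1
  exact ⟨m, zsmul_eq_mul _ _⟩

theorem sub_mem_periods_of_comp_eq_exp [TopologicalSpace E] (hp : IsCoveringMap p)
    (hf : Continuous f) (hpf : p ∘ f = exp) {t s : ℝ} (hts : f t = f s) : t - s ∈ periods f := by
  have hpf' (u : ℝ) : p (f u) = exp u := congrFun hpf u
  have hexp : exp (t - s) = 1 := by rw [exp_sub, div_eq_one, ← hpf', ← hpf', hts]
  -- `u ↦ f (u + (t - s))` is another lift of `exp`, and it agrees with `f` at `s`
  have := hp.eq_of_comp_eq (g₁ := fun u => f (u + (t - s))) (hf.comp (continuous_add_const _)) hf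
    (by funext u; simp only [comp_apply, hpf', exp_add, hexp, mul_one]) s (by simpa)
  exact congrFun this

theorem exists_apply_eq_apply_iff_modEq_of_comp_eq_exp [TopologicalSpace E]
    (hp : IsCoveringMap p) (hf : Continuous f) (hpf : p ∘ f = exp) :
    ∃ n : ℕ, ∀ t s, f t = f s ↔ t ≡ s [PMOD n • (2 * π)] := by
  obtain ⟨n, hn⟩ :=
    exists_eq_zmultiples_nsmul_of_le_zmultiples (periods_le_zmultiples_of_comp_eq_exp hpf)
  refine ⟨n, fun t s => ⟨fun hts => ?_, fun hts => ?_⟩⟩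
  · obtain ⟨m, hm⟩ := mem_zmultiples_iff.1 (hn ▸ sub_mem_periods_of_comp_eq_exp hp hf hpf hts)
    exact AddCommGroup.modEq_iff_zsmul.2 ⟨-m, by rw [neg_zsmul, hm, neg_sub]⟩
  · obtain ⟨m, hm⟩ := AddCommGroup.modEq_iff_zsmul.1 hts
    have : s - t ∈ periods f := hn ▸ ⟨m, hm⟩
    simpa using (this t).symm

end Circle

/-- Classification of the connected coverings of the circle: a covering `p : E → Circle` with
`E` connected and locally path-connected is isomorphic over the circle either to the universal
covering `exp : ℝ → Circle`, `t ↦ exp (t * I)`, or to a degree-`n` self-covering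
`z ↦ z ^ n` for some positive integer `n`. -/
theorem coverings_of_circle {E : Type*} [TopologicalSpace E]
    [ConnectedSpace E] [LocallyPathConnectedSpace E]
    {p : E → Circle} (hp : IsCoveringMap p) :
    (∃ h : ℝ ≃ₜ E, ∀ t : ℝ, p (h t) = Circle.exp t) ∨
      ∃ n : ℕ, 0 < n ∧ ∃ h : Circle ≃ₜ E, ∀ z : Circle, p (h z) = z ^ n := by
  obtain ⟨e⟩ : Nonempty E := inferInstance
  obtain ⟨f, -, hpf⟩ :=
    (hp.existsUnique_continuousMap_lifts Circle.exp _ e (Circle.exp_arg (p e)).symm).exists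
  have := PathConnectedSpace.of_locallyPathConnectedSpace (X := E)
  have hf := hp.isQuotientMap_of_comp_eq Circle.isCoveringMap_exp f.continuous hpf
  obtain ⟨n, hfib⟩ := Circle.exists_apply_eq_apply_iff_modEq_of_comp_eq_exp hp f.continuous hpf
  rcases Nat.eq_zero_or_pos n with rfl | hn
  · obtain ⟨h, hh⟩ := IsQuotientMap.id.exists_homeomorph_comp_eq hf fun t s => by
      rw [hfib, zero_smul, AddCommGroup.modEq_zero]; rfl
    exact .inl ⟨h, fun t => by rw [← congrFun hpf t, ← hh]; rfl⟩
  · obtain ⟨h, hh⟩ := (Circle.isQuotientMap_exp_div_natCast hn.ne').exists_homeomorph_comp_eq hf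
      fun t s => by rw [Circle.exp_div_natCast_eq_iff hn.ne', hfib]
    refine .inr ⟨n, hn, h, fun z => ?_⟩
    obtain ⟨t, rfl⟩ := Circle.exp_surjective z
    have hht : h (Circle.exp t) = f (n * t) := by
      simpa [mul_div_cancel_left₀ t (Nat.cast_ne_zero.2 hn.ne')] using congrFun hh (n * t)
    rw [hht, ← comp_apply (f := p), hpf, Circle.exp_natCast_mul]
end
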